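/- arXiv:2007.08771 — 3 statements merged into one kernel-verified Lean document; each statement's English description precedes it below -/
import Mathlib

section
/- For any nonnegative integer k and positive integer ℓ, there exists a positive integer N such that: if G is a graph having a vertex-cover of size at most k, then for every positive integer m, every m-coloring of G^ℓ has all monochromatic components of weak diameter in G^ℓ at most N. -/
open SimpleGraph

/-- The ℓ-th power of a graph: distinct vertices are adjacent iff their
distance in `G` is at most `ℓ` (using the extended distance, so unreachable
pairs are non-adjacent). -/
def SimpleGraph.pow {V : Type} (G : SimpleGraph V) (ℓ : ℕ) : SimpleGraph V where
  Adj u v := u ≠ v ∧ G.edist u v ≤ ℓ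
  symm := by
    constructor
    intro u v h
    exact ⟨h.1.symm, by rw [SimpleGraph.edist_comm]; exact h.2⟩
  loopless := by constructor; intro v h; exact h.1 rfl

/-- `MonoReach H c u v` : `u` and `v` lie in the same `c`-monochromatic
component of `H` (joined by a walk all of whose vertices get the same color). -/
def MonoReach {V : Type} {α : Type} (H : SimpleGraph V) (c : V → α) : V → V → Prop :=
  Relation.ReflTransGen (fun a b => H.Adj a b ∧ c a = c b)

/-- `N_G^{≤ r}[S]` : vertices joined to `S` by a path of length at most `r`. -/
def ballSet {V : Type} (G : SimpleGraph V) (S : Set V) (r : ℕ) : Set V :=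
  {v | ∃ s ∈ S, G.edist s v ≤ r}

/-- Tree-decomposition of `G` with tree `Tg` and bags `bag`. -/
def IsTreeDecomp {V T : Type} (G : SimpleGraph V) (Tg : SimpleGraph T) (bag : T → Set V) : Prop :=
  Tg.Connected ∧ Tg.IsAcyclic ∧
  (∀ v, ∃ t, v ∈ bag t) ∧
  (∀ u v, G.Adj u v → ∃ t, u ∈ bag t ∧ v ∈ bag t) ∧
  (∀ v, (Tg.induce {t | v ∈ bag t}).Preconnected)

/-- A layering of `G`: every edge joins two consecutive layers. -/
def IsLayering {V : Type} (G : SimpleGraph V) (L : V → ℕ) : Prop :=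
  ∀ u v, G.Adj u v → L u ≤ L v + 1 ∧ L v ≤ L u + 1

/-- Layered tree-width at most `w`. -/
def LayeredTreewidthLE (V : Type) (G : SimpleGraph V) (w : ℕ) : Prop :=
  ∃ (T : Type) (Tg : SimpleGraph T) (bag : T → Set V) (L : V → ℕ),
    IsTreeDecomp G Tg bag ∧ IsLayering G L ∧
    ∀ t i, (bag t ∩ L ⁻¹' {i}).encard ≤ w

/-!
On a walk in `G`, no two consecutive vertices avoid a vertex cover `S`, so a path meets at most
`|S|` vertices of `S` and has length at most `2|S| + 1`. Hence vertices joined by a walk are at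
distance at most `2k + 1` in `G`, and a fortiori in `G^ℓ ≥ G`. A monochromatic component of
`G^ℓ` lies in a component of `G`, so its weak diameter is at most `2k + 1`, whatever the coloring.
-/

namespace SimpleGraph

section VertexCover

variable {V : Type*} {G : SimpleGraph V} {S : Set V}

-- The `if` term strengthens the claim enough for the induction along the walk.
lemma IsVertexCover.length_add_ite_le [DecidablePred (· ∈ S)] (hS : G.IsVertexCover S) {a b : V}
    (q : G.Walk a b) :
    q.length + (if a ∈ S then 1 else 0) ≤ 2 * q.support.countP (· ∈ S) + 1 := by
  induction q with
  | nil => split_ifs <;> simp [*]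
  | @cons a w b hadj q ih =>
    by_cases ha : a ∈ S
    · by_cases hw : w ∈ S <;> simp [ha, hw] at ih ⊢ <;> omega
    · have hw : w ∈ S := (hS hadj).resolve_left ha
      simp [ha, hw] at ih ⊢
      omega

lemma Walk.IsPath.countP_mem_le [DecidablePred (· ∈ S)] {k : ℕ} {a b : V} {p : G.Walk a b}
    (hp : p.IsPath) (hk : S.encard ≤ k) : p.support.countP (· ∈ S) ≤ k := by
  classical
  have hsub : (↑(p.support.filter (· ∈ S)).toFinset : Set V) ⊆ S := by
    intro x hx
    simp only [List.coe_toFinset, List.mem_filter, decide_eq_true_eq] at hx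
    exact hx.2
  have hcard : ((p.support.countP (· ∈ S) : ℕ) : ℕ∞) ≤ k :=
    calc ((p.support.countP (· ∈ S) : ℕ) : ℕ∞)
        = (↑(p.support.filter (· ∈ S)).toFinset : Set V).encard := by
          rw [Set.encard_coe_eq_coe_finsetCard,
            List.toFinset_card_of_nodup (hp.support_nodup.filter _), List.countP_eq_length_filter]
      _ ≤ S.encard := Set.encard_mono hsub
      _ ≤ k := hk
  exact_mod_cast hcard

lemma Walk.IsPath.length_le_of_isVertexCover {k : ℕ} {a b : V} {p : G.Walk a b}
    (hp : p.IsPath) (hS : G.IsVertexCover S) (hk : S.encard ≤ k) : p.length ≤ 2 * k + 1 := by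
  classical
  have := hS.length_add_ite_le p
  have := hp.countP_mem_le hk
  omega

lemma Reachable.edist_le_of_isVertexCover {k : ℕ} {u v : V} (huv : G.Reachable u v)
    (hS : G.IsVertexCover S) (hk : S.encard ≤ k) :
    G.edist u v ≤ ((2 * k + 1 : ℕ) : ℕ∞) := by
  classical
  obtain ⟨p, -⟩ := huv.exists_walk_length_eq_edist
  calc G.edist u v ≤ (p.toPath : G.Walk u v).length := edist_le _
    _ ≤ ((2 * k + 1 : ℕ) : ℕ∞) := by
      exact_mod_cast p.toPath.2.length_le_of_isVertexCover hS hk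

end VertexCover

section Pow

variable {V : Type} {G : SimpleGraph V} {ℓ : ℕ}

lemma le_pow (hℓ : 0 < ℓ) : G ≤ G.pow ℓ := fun _ _ h =>
  ⟨h.ne, (edist_eq_one_iff_adj.mpr h).le.trans (by exact_mod_cast hℓ)⟩

lemma Adj.reachable_of_pow {u v : V} (h : (G.pow ℓ).Adj u v) : G.Reachable u v :=
  reachable_of_edist_ne_top (ne_top_of_le_ne_top (ENat.natCast_ne_top _) h.2)

lemma _root_.MonoReach.reachable_of_pow {α : Type} {c : V → α} {u v : V}
    (h : MonoReach (G.pow ℓ) c u v) : G.Reachable u v := by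
  induction h with
  | refl => rfl
  | tail _ hbc ih => exact ih.trans hbc.1.reachable_of_pow

end Pow

end SimpleGraph

/-- If `G` has a vertex-cover of size at most `k`, then every coloring of
`G^ℓ` has all monochromatic components of weak diameter in `G^ℓ` at most `N`,
for some `N` depending only on `k, ℓ`. -/
theorem stmt6 (k ℓ : ℕ) (hℓ : 0 < ℓ) :
    ∃ N : ℕ, 0 < N ∧
      ∀ {V : Type} (G : SimpleGraph V) (S : Set V),
        S.encard ≤ (k : ℕ∞) → (∀ u v, G.Adj u v → u ∈ S ∨ v ∈ S) →
        ∀ (m : ℕ), 0 < m → ∀ (c : V → Fin m),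
          ∀ u v, MonoReach (G.pow ℓ) c u v → (G.pow ℓ).edist u v ≤ (N : ℕ∞) := by
  refine ⟨2 * k + 1, Nat.succ_pos _, ?_⟩
  intro V G S hk hS _ _ c u v huv
  calc (G.pow ℓ).edist u v ≤ G.edist u v := edist_anti (le_pow hℓ)
    _ ≤ _ := huv.reachable_of_pow.edist_le_of_isVertexCover (fun a b h => hS a b h) hk
end

section
/- For any positive integers ℓ, N and nonnegative integer n, there exists N* with the following property: for every positive integer m, if F is a class of graphs such that every G ∈ F admits an m-coloring of G^ℓ with weak diameter in G^ℓ at most N, then every graph H for which there exists Z ⊆ V(H) with |Z| ≤ n and H − Z ∈ F admits an m-coloring of H^ℓ with weak diameter in H^ℓ at most N*. -/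
open SimpleGraph

/-!
Colour the apices `Z` with one fixed colour and every other vertex as in `H - Z`. A monochromatic
walk in `H^ℓ` then splits into monochromatic pieces of `(H - Z)^ℓ`, each of diameter at most `N`
in `H^ℓ`, joined by steps `b → w` of `H^ℓ` which either stay in `H - Z` or pass through an apex
`z` with `b, w` both within distance `1` of `z` in `H^ℓ`. Consecutive apices met by the walk are
therefore at distance at most `N + 2` in `H^ℓ`, so all of them lie in one component of the graph
on `Z` joining apices at that distance; such a component has diameter at most `(N + 2) |Z|`.
Adding the pieces before the first and after the last apex gives the bound `(n + 2) (N + 2)`.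
-/

namespace SimpleGraph

variable {V W A : Type} {G : SimpleGraph V} {G' : SimpleGraph W}

lemma Hom.edist_le (f : G →g G') (u v : V) : G'.edist (f u) (f v) ≤ G.edist u v := by
  by_cases h : G.edist u v = ⊤
  · simp [h]
  · obtain ⟨p, hp⟩ := exists_walk_of_edist_ne_top h
    calc G'.edist (f u) (f v) ≤ (p.map f).length := SimpleGraph.edist_le _
      _ = G.edist u v := by rw [Walk.length_map, hp]

lemma edist_induce_le_length {s : Set V} {u v : V} (p : G.Walk u v)
    (hp : ∀ x ∈ p.support, x ∈ s) :
    (G.induce s).edist ⟨u, hp _ p.start_mem_support⟩ ⟨v, hp _ p.end_mem_support⟩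
      ≤ p.length := by
  calc _ ≤ ((p.induce s hp).length : ℕ∞) := edist_le _
    _ = (p.length : ℕ∞) := by
      rw [← Walk.length_map (Embedding.induce s).toHom, Walk.map_induce]; rfl

lemma edist_le_length_mul {K : SimpleGraph A} (f : A → V) {C : ℕ∞}
    (hK : ∀ a b, K.Adj a b → G.edist (f a) (f b) ≤ C) {a b : A} (p : K.Walk a b) :
    G.edist (f a) (f b) ≤ p.length * C := by
  induction p with
  | nil => simp
  | cons h q ih =>
    calc _ ≤ _ := SimpleGraph.edist_triangle
      _ ≤ C + q.length * C := add_le_add (hK _ _ h) ih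
      _ = _ := by rw [Walk.length_cons]; push_cast; ring

lemma pow_edist_le_one {ℓ : ℕ} {u v : V} (h : G.edist u v ≤ ℓ) : (G.pow ℓ).edist u v ≤ 1 := by
  rw [edist_le_one_iff_adj_or_eq]
  by_cases huv : u = v
  · exact Or.inr huv
  · exact Or.inl ⟨huv, h⟩

lemma reachable_induce_pow_of_edist_le {s : Set V} {C : ℕ} {a b : s}
    (h : G.edist a b ≤ C) : ((G.pow C).induce s).Reachable a b := by
  by_cases hab : a = b
  · exact hab ▸ Reachable.refl a
  · exact Adj.reachable (show (G.pow C).Adj a b from ⟨fun h => hab (Subtype.ext h), h⟩)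

lemma edist_le_of_reachable_induce_pow {s : Set V} {C n : ℕ} (hs : s.encard ≤ n) {a b : s}
    (h : ((G.pow C).induce s).Reachable a b) : G.edist a b ≤ n * C := by
  classical
  have : Fintype s := (Set.finite_of_encard_le_coe hs).fintype
  have hcard : Fintype.card s ≤ n := by
    rwa [Set.encard_eq_coe_toFinset_card, Set.toFinset_card, Nat.cast_le] at hs
  obtain ⟨p⟩ := h
  calc G.edist a b ≤ p.toPath.1.length * (C : ℕ∞) :=
        edist_le_length_mul (K := (G.pow C).induce s) Subtype.val (fun _ _ hadj => hadj.2) _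
    _ ≤ n * C := by gcongr; exact_mod_cast p.toPath.2.length_lt.le.trans hcard

def inducePowHom (s : Set V) (ℓ : ℕ) : (G.induce s).pow ℓ →g G.pow ℓ where
  toFun := Subtype.val
  map_rel' h :=
    ⟨fun e => h.1 (Subtype.ext e), ((Embedding.induce s).toHom.edist_le _ _).trans h.2⟩

end SimpleGraph

section Apex

variable {V α : Type} {P : SimpleGraph V} {Z : Set V} {Q : SimpleGraph {v | v ∉ Z}}
  {c₀ : {v | v ∉ Z} → α} {N : ℕ}

variable (P Z Q) in
/-- `Q` plays the role of `P - Z`: an edge of `P` avoiding the apices `Z` is an edge of `Q`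
unless it passes next to an apex. -/
def IsApexReduction : Prop :=
  ∀ b w (hb : b ∉ Z) (hw : w ∉ Z), P.Adj b w →
    Q.Adj ⟨b, hb⟩ ⟨w, hw⟩ ∨ ∃ z ∈ Z, P.edist b z ≤ 1 ∧ P.edist z w ≤ 1

variable (P Z Q c₀) in
def ApexAnchored (z v : V) : Prop :=
  P.edist z v ≤ 1 ∨
    ∃ (hv : v ∉ Z) (a : {v | v ∉ Z}), MonoReach Q c₀ a ⟨v, hv⟩ ∧ P.edist z a ≤ 1

variable (P Z Q c₀ N) in
/-- The invariant along a monochromatic walk from `u` to `v`: either the walk is a monochromatic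
walk of `Q`, or the apices it passes lie in one component of the graph joining apices at
distance `≤ N + 2`, the first one close to `u` and the last one anchoring `v`. -/
def ApexLinked (u v : V) : Prop :=
  (∃ (hu : u ∉ Z) (hv : v ∉ Z), MonoReach Q c₀ ⟨u, hu⟩ ⟨v, hv⟩) ∨
    ∃ z z' : Z, ((P.pow (N + 2)).induce Z).Reachable z z' ∧ P.edist u z ≤ N + 1 ∧
      ApexAnchored P Z Q c₀ z' v

lemma ApexAnchored.edist_le (hdiam : ∀ a b, MonoReach Q c₀ a b → P.edist a b ≤ N) {z v : V}
    (h : ApexAnchored P Z Q c₀ z v) : P.edist z v ≤ N + 1 := by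
  rcases h with h | ⟨_, a, hav, hza⟩
  · exact h.trans le_add_self
  · calc P.edist z v ≤ P.edist z a + P.edist a v := SimpleGraph.edist_triangle
      _ ≤ 1 + N := add_le_add hza (hdiam _ _ hav)
      _ = N + 1 := add_comm _ _

lemma apexLinked_refl (u : V) : ApexLinked P Z Q c₀ N u u := by
  by_cases hu : u ∈ Z
  · exact Or.inr ⟨⟨u, hu⟩, ⟨u, hu⟩, .refl _, by simp, Or.inl (by simp)⟩
  · exact Or.inl ⟨hu, hu, .refl⟩

lemma ApexLinked.tail_of_adj {u b w : V} (h : ApexLinked P Z Q c₀ N u b) (hb : b ∉ Z)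
    (hw : w ∉ Z) (hbw : Q.Adj ⟨b, hb⟩ ⟨w, hw⟩ ∧ c₀ ⟨b, hb⟩ = c₀ ⟨w, hw⟩) :
    ApexLinked P Z Q c₀ N u w := by
  rcases h with ⟨hu, _, hub⟩ | ⟨z, z', hzz', huz, hz'b | ⟨_, a, hab, hz'a⟩⟩
  · exact Or.inl ⟨hu, hw, Relation.ReflTransGen.tail hub hbw⟩
  · exact Or.inr ⟨z, z', hzz', huz, Or.inr ⟨hw, ⟨b, hb⟩, .single hbw, hz'b⟩⟩
  · exact Or.inr ⟨z, z', hzz', huz, Or.inr ⟨hw, a, Relation.ReflTransGen.tail hab hbw, hz'a⟩⟩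

lemma ApexLinked.tail_of_near (hdiam : ∀ a b, MonoReach Q c₀ a b → P.edist a b ≤ N)
    {u b w z : V} (h : ApexLinked P Z Q c₀ N u b) (hz : z ∈ Z) (hbz : P.edist b z ≤ 1)
    (hzw : P.edist z w ≤ 1) : ApexLinked P Z Q c₀ N u w := by
  suffices ∃ y : Z, ((P.pow (N + 2)).induce Z).Reachable y ⟨z, hz⟩ ∧ P.edist u y ≤ N + 1 from
    let ⟨y, hyz, huy⟩ := this
    Or.inr ⟨y, ⟨z, hz⟩, hyz, huy, Or.inl hzw⟩
  rcases h with ⟨_, _, hub⟩ | ⟨y, y', hyy', huy, hy'b⟩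
  · refine ⟨⟨z, hz⟩, .refl _, ?_⟩
    calc P.edist u z ≤ P.edist u b + P.edist b z := SimpleGraph.edist_triangle
      _ ≤ N + 1 := add_le_add (hdiam _ _ hub) hbz
  · refine ⟨y, hyy'.trans (reachable_induce_pow_of_edist_le ?_), huy⟩
    calc P.edist y' z ≤ P.edist y' b + P.edist b z := SimpleGraph.edist_triangle
      _ ≤ (N + 1 : ℕ∞) + 1 := add_le_add (hy'b.edist_le hdiam) hbz
      _ = (N + 2 : ℕ) := by push_cast; ring

lemma IsApexReduction.adj_cases (hQ : IsApexReduction P Z Q) {c : V → α}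
    (hc : ∀ v (hv : v ∉ Z), c v = c₀ ⟨v, hv⟩) {b w : V} (h : P.Adj b w) (hcol : c b = c w) :
    (∃ (hb : b ∉ Z) (hw : w ∉ Z), Q.Adj ⟨b, hb⟩ ⟨w, hw⟩ ∧ c₀ ⟨b, hb⟩ = c₀ ⟨w, hw⟩) ∨
      ∃ z ∈ Z, P.edist b z ≤ 1 ∧ P.edist z w ≤ 1 := by
  have hbw : P.edist b w ≤ 1 := edist_le_one_iff_adj_or_eq.2 (Or.inl h)
  by_cases hb : b ∈ Z
  · exact Or.inr ⟨b, hb, by simp, hbw⟩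
  by_cases hw : w ∈ Z
  · exact Or.inr ⟨w, hw, hbw, by simp⟩
  refine (hQ b w hb hw h).imp (fun hadj => ⟨hb, hw, hadj, ?_⟩) id
  rw [← hc b hb, ← hc w hw, hcol]

lemma IsApexReduction.apexLinked_of_monoReach (hQ : IsApexReduction P Z Q) {c : V → α}
    (hc : ∀ v (hv : v ∉ Z), c v = c₀ ⟨v, hv⟩)
    (hdiam : ∀ a b, MonoReach Q c₀ a b → P.edist a b ≤ N) {u v : V} (h : MonoReach P c u v) :
    ApexLinked P Z Q c₀ N u v := by
  induction h with
  | refl => exact apexLinked_refl u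
  | tail _ hstep ih =>
    rcases hQ.adj_cases hc hstep.1 hstep.2 with ⟨hb, hw, hbw⟩ | ⟨z, hz, hbz, hzw⟩
    · exact ih.tail_of_adj hb hw hbw
    · exact ih.tail_of_near hdiam hz hbz hzw

lemma ApexLinked.edist_le (hdiam : ∀ a b, MonoReach Q c₀ a b → P.edist a b ≤ N) {n : ℕ}
    (hZ : Z.encard ≤ n) {u v : V} (h : ApexLinked P Z Q c₀ N u v) :
    P.edist u v ≤ ((n + 2) * (N + 2) : ℕ) := by
  rcases h with ⟨_, _, huv⟩ | ⟨z, z', hzz', huz, hz'v⟩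
  · exact (hdiam _ _ huv).trans (Nat.cast_le.2 (by nlinarith))
  · calc P.edist u v ≤ P.edist u z + P.edist z z' + P.edist z' v :=
          SimpleGraph.edist_triangle.trans (add_le_add_left SimpleGraph.edist_triangle _)
      _ ≤ (N + 1 : ℕ∞) + n * (N + 2 : ℕ) + (N + 1) :=
          add_le_add (add_le_add huz (edist_le_of_reachable_induce_pow hZ hzz'))
            (hz'v.edist_le hdiam)
      _ ≤ ((n + 2) * (N + 2) : ℕ) := by norm_cast; nlinarith

end Apex

lemma isApexReduction_pow_induce {V : Type} (H : SimpleGraph V) (Z : Set V) (ℓ : ℕ) :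
    IsApexReduction (H.pow ℓ) Z ((H.induce {v | v ∉ Z}).pow ℓ) := by
  classical
  intro b w hb hw ⟨hne, hd⟩
  obtain ⟨p, hp⟩ := exists_walk_of_edist_ne_top (ne_top_of_le_ne_top (by simp) hd)
  have hpℓ : (p.length : ℕ∞) ≤ ℓ := hp ▸ hd
  by_cases hall : ∀ x ∈ p.support, x ∉ Z
  · exact Or.inl ⟨fun e => hne congr($e.1), (edist_induce_le_length p hall).trans hpℓ⟩
  · push Not at hall
    obtain ⟨z, hzp, hz⟩ := hall
    refine Or.inr ⟨z, hz, pow_edist_le_one ?_, pow_edist_le_one ?_⟩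
    · exact (edist_le _).trans ((Nat.cast_le.mpr (p.length_takeUntil_le_length hzp)).trans hpℓ)
    · exact (edist_le _).trans ((Nat.cast_le.mpr (p.length_dropUntil_le_length hzp)).trans hpℓ)

theorem stmt7_general (ℓ N n : ℕ) :
    ∃ N' : ℕ, N ≤ N' ∧
      ∀ (m : ℕ), 0 < m →
      ∀ (F : {V : Type} → SimpleGraph V → Prop),
        (∀ {V : Type} (G : SimpleGraph V), F G →
          ∃ c : V → Fin m, ∀ u v, MonoReach (G.pow ℓ) c u v →
            (G.pow ℓ).edist u v ≤ (N : ℕ∞)) →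
        ∀ {V : Type} (H : SimpleGraph V) (Z : Set V),
          Z.encard ≤ (n : ℕ∞) → F (H.induce {v | v ∉ Z}) →
          ∃ c : V → Fin m, ∀ u v, MonoReach (H.pow ℓ) c u v →
            (H.pow ℓ).edist u v ≤ (N' : ℕ∞) := by
  refine ⟨(n + 2) * (N + 2), by nlinarith, fun m hm F hF V H Z hZ hFZ => ?_⟩
  obtain ⟨c₀, hc₀⟩ := hF _ hFZ
  have hdiam : ∀ a b, MonoReach ((H.induce {v | v ∉ Z}).pow ℓ) c₀ a b →
      (H.pow ℓ).edist a b ≤ N :=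
    fun a b hab => ((inducePowHom _ ℓ).edist_le a b).trans (hc₀ a b hab)
  refine ⟨Function.extend Subtype.val c₀ fun _ => ⟨0, hm⟩, fun u v huv => ?_⟩
  exact ((isApexReduction_pow_induce H Z ℓ).apexLinked_of_monoReach
    (fun v hv => Subtype.val_injective.extend_apply c₀ _ ⟨v, hv⟩) hdiam huv).edist_le hdiam hZ

/-- Adding at most `n` apex vertices preserves the existence of `m`-colorings
of the `ℓ`-th power with bounded weak diameter (with the bound worsening from
`N` to some `N*` depending only on `ℓ, N, n`). -/
theorem stmt7 (ℓ N n : ℕ) (hℓ : 0 < ℓ) (hN : 0 < N) :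
    ∃ N' : ℕ, N ≤ N' ∧
      ∀ (m : ℕ), 0 < m →
      ∀ (F : {V : Type} → SimpleGraph V → Prop),
        (∀ {V : Type} (G : SimpleGraph V), F G →
          ∃ c : V → Fin m, ∀ u v, MonoReach (G.pow ℓ) c u v →
            (G.pow ℓ).edist u v ≤ (N : ℕ∞)) →
        ∀ {V : Type} (H : SimpleGraph V) (Z : Set V),
          Z.encard ≤ (n : ℕ∞) → F (H.induce {v | v ∉ Z}) →
          ∃ c : V → Fin m, ∀ u v, MonoReach (H.pow ℓ) c u v →
            (H.pow ℓ).edist u v ≤ (N' : ℕ∞) :=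
  stmt7_general ℓ N n
end

section
/- Let p be a positive integer. Suppose H is a graph of layered tree-width at most p, and G is obtained from H by adding new vertices and new edges incident with new vertices such that the neighborhood of each new vertex is contained in a clique of H. Then G has layered tree-width at most p + 1. -/
open SimpleGraph

/-!
A clique of `H` lies in two consecutive layers of any layering and, by the Helly property of
subtrees of a tree, in a single bag of any tree-decomposition; so it has at most `2p` vertices
and the neighbourhood `N(a)` of each new vertex `a` lies in some bag `X_{τ a}`. Hang a new leaf
with bag `N(a) ∪ {a}` from the node `τ a` and put `a` in the lowest layer meeting `N(a)`: the
edges at `a` then join consecutive layers, and each new bag meets a layer in at most `p` old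
vertices and `a`.
-/

namespace SimpleGraph

variable {V : Type*} {G : SimpleGraph V}

theorem Walk.IsPath.append {u v w : V} {p : G.Walk u v} {q : G.Walk v w}
    (hp : p.IsPath) (hq : q.IsPath) (hpq : ∀ x ∈ p.support, x ∈ q.support → x = v) :
    (p.append q).IsPath := by
  have hq' := hq.support_nodup
  rw [← q.cons_tail_support, List.nodup_cons] at hq'
  rw [Walk.isPath_def, Walk.support_append]
  refine hp.support_nodup.append hq'.2 fun x hxp hxq => ?_
  obtain rfl := hpq x hxp (List.mem_of_mem_tail hxq)
  exact hq'.1 hxq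

theorem IsAcyclic.support_subset_support_of_isPath (hG : G.IsAcyclic) {u v : V}
    {p : G.Walk u v} (hp : p.IsPath) (w : G.Walk u v) : p.support ⊆ w.support := by
  classical
  obtain rfl : p = w.bypass :=
    congrArg Subtype.val ((hG.subsingleton_path u v).elim ⟨p, hp⟩ ⟨_, w.bypass_isPath⟩)
  exact w.support_bypass_subset_support

theorem Walk.exists_isPath_to_first_mem (S : Set V) {u v : V} (w : G.Walk u v) (hv : v ∈ S) :
    ∃ x ∈ S, ∃ p : G.Walk u x, p.IsPath ∧ ∀ y ∈ p.support, y ∈ S → y = x := by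
  classical
  induction w with
  | nil => exact ⟨_, hv, .nil, .nil, by simp⟩
  | @cons u _ _ h w ih =>
    by_cases hu : u ∈ S
    · exact ⟨u, hu, .nil, .nil, by simp⟩
    obtain ⟨x, hx, p, -, hfirst⟩ := ih hv
    refine ⟨x, hx, (p.cons h).bypass, (p.cons h).bypass_isPath, fun y hy hyS => ?_⟩
    rcases List.mem_cons.mp ((p.cons h).support_bypass_subset_support hy) with rfl | hy
    · exact absurd hyS hu
    · exact hfirst y hy hyS

theorem exists_walk_support_subset_of_preconnected_induce {S : Set V}
    (hS : (G.induce S).Preconnected) {u v : V} (hu : u ∈ S) (hv : v ∈ S) :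
    ∃ w : G.Walk u v, ∀ x ∈ w.support, x ∈ S := by
  obtain ⟨w, hw⟩ := (Subgraph.preconnected_iff_forall_exists_walk_subgraph _).mp
    (preconnected_induce_iff.mp hS) hu hv
  exact ⟨w, fun x hx => hw.1 (w.mem_verts_toSubgraph.mpr hx)⟩

theorem IsAcyclic.exists_mem_support_of_walk (hG : G.IsAcyclic) (hconn : G.Connected)
    {S : Set V} (hS : (G.induce S).Preconnected) (hne : S.Nonempty) (t : V) :
    ∃ x ∈ S, ∀ s ∈ S, ∀ w : G.Walk t s, x ∈ w.support := by
  classical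
  obtain ⟨s₀, hs₀⟩ := hne
  obtain ⟨x, hx, p, hp, hfirst⟩ := (hconn t s₀).some.exists_isPath_to_first_mem S hs₀
  refine ⟨x, hx, fun s hs w => ?_⟩
  obtain ⟨r, hr⟩ := exists_walk_support_subset_of_preconnected_induce hS hx hs
  have hpath : (p.append r.bypass).IsPath := hp.append r.bypass_isPath fun y hyp hyr =>
    hfirst y hyp (hr y (r.support_bypass_subset_support hyr))
  exact hG.support_subset_support_of_isPath hpath w
    ((Walk.mem_support_append_iff _ _).mpr (.inl p.end_mem_support))

/-- Helly property of subtrees of a tree. -/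
theorem IsAcyclic.exists_forall_mem_of_pairwise_inter_nonempty (hG : G.IsAcyclic)
    (hconn : G.Connected) {ι : Type*} (S : ι → Set V) (s : Finset ι)
    (hS : ∀ i ∈ s, (G.induce (S i)).Preconnected)
    (hs : ∀ i ∈ s, ∀ j ∈ s, (S i ∩ S j).Nonempty) : ∃ t, ∀ i ∈ s, t ∈ S i := by
  classical
  induction s using Finset.induction_on with
  | empty => exact ⟨hconn.nonempty.some, by simp⟩
  | insert j s _ ih =>
    obtain ⟨t, ht⟩ := ih (fun i hi => hS i (Finset.mem_insert_of_mem hi))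
      (fun i hi k hk => hs i (Finset.mem_insert_of_mem hi) k (Finset.mem_insert_of_mem hk))
    have hj := Finset.mem_insert_self j s
    obtain ⟨x, hx, hgate⟩ := hG.exists_mem_support_of_walk hconn (hS j hj)
      ((Set.inter_self (S j)).subst (hs j hj j hj)) t
    refine ⟨x, fun i hi => ?_⟩
    rcases Finset.mem_insert.mp hi with rfl | hi
    · exact hx
    obtain ⟨tij, htij_i, htij_j⟩ := hs i (Finset.mem_insert_of_mem hi) j hj
    obtain ⟨w, hw⟩ := exists_walk_support_subset_of_preconnected_induce
      (hS i (Finset.mem_insert_of_mem hi)) (ht i hi) htij_i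
    exact hw x (hgate tij htij_j w)

end SimpleGraph

section LayeredTreeDecomposition

variable {V T : Type} {G : SimpleGraph V} {Tg : SimpleGraph T} {bag : T → Set V} {L : V → ℕ}
  {K : Set V}

theorem IsTreeDecomp.exists_bag_superset_of_isClique_of_finite (hD : IsTreeDecomp G Tg bag)
    (hK : G.IsClique K) (hfin : K.Finite) : ∃ t, K ⊆ bag t := by
  obtain ⟨hconn, hac, hcover, hedge, hsupp⟩ := hD
  obtain ⟨t, ht⟩ := hac.exists_forall_mem_of_pairwise_inter_nonempty hconn
    (fun v => {t | v ∈ bag t}) hfin.toFinset (fun v _ => hsupp v) fun u hu v hv => by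
      by_cases huv : u = v
      · obtain ⟨t, ht⟩ := hcover u
        exact ⟨t, ht, huv ▸ ht⟩
      · exact hedge u v (hK (hfin.mem_toFinset.mp hu) (hfin.mem_toFinset.mp hv) huv)
  exact ⟨t, fun v hv => ht v (hfin.mem_toFinset.mpr hv)⟩

theorem isLayering_of_forall_adj_le (h : ∀ u v, G.Adj u v → L u ≤ L v + 1) :
    IsLayering G L :=
  fun u v huv => ⟨h u v huv, h v u huv.symm⟩

theorem IsLayering.le_add_one_of_isClique (hL : IsLayering G L) (hK : G.IsClique K) {u v : V}
    (hu : u ∈ K) (hv : v ∈ K) : L u ≤ L v + 1 := by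
  by_cases huv : u = v
  · rw [huv]
    exact Nat.le_succ _
  · exact (hL u v (hK hu hv huv)).1

theorem IsLayering.exists_subset_preimage_pair_of_isClique (hL : IsLayering G L)
    (hK : G.IsClique K) (hfin : K.Finite) : ∃ m, K ⊆ L ⁻¹' {m, m + 1} := by
  rcases K.eq_empty_or_nonempty with rfl | hne
  · exact ⟨0, Set.empty_subset _⟩
  obtain ⟨u, hu, hmin⟩ := Set.exists_min_image K L hfin hne
  refine ⟨L u, fun v hv => ?_⟩
  have := hmin v hv
  have := hL.le_add_one_of_isClique hK hv hu
  simp only [Set.mem_preimage, Set.mem_insert_iff, Set.mem_singleton_iff]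
  omega

theorem SimpleGraph.IsClique.encard_le_of_layered (hD : IsTreeDecomp G Tg bag)
    (hL : IsLayering G L) {w : ℕ} (hw : ∀ t i, (bag t ∩ L ⁻¹' {i}).encard ≤ w)
    (hK : G.IsClique K) :
    K.encard ≤ 2 * w := by
  by_contra! hlt
  obtain ⟨K₀, hK₀, hcard⟩ := Set.exists_subset_encard_eq (Order.add_one_le_of_lt hlt)
  have hfin : K₀.Finite := Set.finite_of_encard_eq_coe (k := 2 * w + 1) (by exact_mod_cast hcard)
  obtain ⟨t, ht⟩ := hD.exists_bag_superset_of_isClique_of_finite (hK.subset hK₀) hfin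
  obtain ⟨m, hm⟩ := hL.exists_subset_preimage_pair_of_isClique (hK.subset hK₀) hfin
  have hsub : K₀ ⊆ (bag t ∩ L ⁻¹' {m}) ∪ (bag t ∩ L ⁻¹' {m + 1}) := by
    rw [← Set.inter_union_distrib_left, ← Set.preimage_union, ← Set.insert_eq]
    exact Set.subset_inter ht hm
  have : 2 * (w : ℕ∞) + 1 ≤ 2 * w :=
    calc 2 * (w : ℕ∞) + 1 = K₀.encard := hcard.symm
      _ ≤ (bag t ∩ L ⁻¹' {m}).encard + (bag t ∩ L ⁻¹' {m + 1}).encard :=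
        (Set.encard_le_encard hsub).trans (Set.encard_union_le _ _)
      _ ≤ w + w := add_le_add (hw t m) (hw t (m + 1))
      _ = 2 * w := (two_mul _).symm
  exact absurd this (by norm_cast; omega)

theorem IsTreeDecomp.exists_bag_superset_of_isClique (hD : IsTreeDecomp G Tg bag)
    (hL : IsLayering G L) {w : ℕ} (hw : ∀ t i, (bag t ∩ L ⁻¹' {i}).encard ≤ w)
    (hK : G.IsClique K) : ∃ t, K ⊆ bag t :=
  hD.exists_bag_superset_of_isClique_of_finite hK
    (Set.finite_of_encard_le_coe ((hK.encard_le_of_layered hD hL hw).trans_eq (by norm_cast)))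

end LayeredTreeDecomposition

def attachLeaves {T A : Type} (Tg : SimpleGraph T) (τ : A → T) : SimpleGraph (T ⊕ A) where
  Adj x y := match x, y with
    | .inl s, .inl t => Tg.Adj s t
    | .inl t, .inr a => t = τ a
    | .inr a, .inl t => t = τ a
    | .inr _, .inr _ => False
  symm := ⟨by
    rintro (s | a) (t | b) h
    exacts [h.symm, h, h, h]⟩
  loopless := ⟨by
    rintro (t | a) h
    exacts [Tg.loopless.irrefl t h, h]⟩

namespace attachLeaves

variable {T A : Type} {Tg : SimpleGraph T} {τ : A → T}

theorem adj_inr_iff {a : A} {z : T ⊕ A} :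
    (attachLeaves Tg τ).Adj (.inr a) z ↔ z = .inl (τ a) := by
  rcases z with t | b
  · exact ⟨fun h => congrArg Sum.inl h, fun h => Sum.inl_injective h⟩
  · exact ⟨False.elim, fun h => Sum.inl_ne_inr h.symm⟩

def inlEmbedding (Tg : SimpleGraph T) (τ : A → T) : Tg ↪g attachLeaves Tg τ where
  toEmbedding := .inl
  map_rel_iff' := Iff.rfl

theorem connected (hconn : Tg.Connected) : (attachLeaves Tg τ).Connected := by
  have hinl : ∀ z : T ⊕ A, ∃ t, (attachLeaves Tg τ).Reachable z (.inl t) := by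
    rintro (t | a)
    · exact ⟨t, .rfl⟩
    · exact ⟨τ a, Adj.reachable rfl⟩
  have : Nonempty (T ⊕ A) := ⟨.inl hconn.nonempty.some⟩
  refine ⟨fun x y => ?_⟩
  obtain ⟨s, hs⟩ := hinl x
  obtain ⟨t, ht⟩ := hinl y
  exact hs.trans (((hconn s t).map (inlEmbedding Tg τ).toHom).trans ht.symm)

/-- A cycle cannot pass through a leaf, since a leaf has a single neighbour; so every cycle lies
in the copy of `Tg`. -/
theorem isAcyclic (hac : Tg.IsAcyclic) : (attachLeaves Tg τ).IsAcyclic := by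
  classical
  intro v c hc
  by_cases hleaf : ∃ a, Sum.inr a ∈ c.support
  · obtain ⟨a, ha⟩ := hleaf
    have hc' := hc.rotate ha
    apply hc'.snd_ne_penultimate
    rw [adj_inr_iff.mp ((c.rotate _ ha).adj_snd hc'.not_nil),
      adj_inr_iff.mp ((c.rotate _ ha).adj_penultimate hc'.not_nil).symm]
  · push Not at hleaf
    have hS : ∀ x ∈ c.support, x ∈ Set.range Sum.inl := by
      rintro (t | a) hx
      exacts [⟨t, rfl⟩, absurd hx (hleaf a)]
    have hac' : ((attachLeaves Tg τ).induce (Set.range Sum.inl)).IsAcyclic :=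
      (inlEmbedding Tg τ).isoInduceRange.isAcyclic_iff.mp hac
    apply hac' (c.induce _ hS)
    let e := Embedding.induce (G := attachLeaves Tg τ) (Set.range Sum.inl)
    rwa [← Walk.isCycle_map_iff_of_injective (f := e.toHom) e.injective, Walk.map_induce]

theorem induce_preconnected {S : Set (T ⊕ A)} (hS : (Tg.induce (Sum.inl ⁻¹' S)).Preconnected)
    (hleaf : ∀ a, Sum.inr a ∈ S → Sum.inl (τ a) ∈ S) :
    ((attachLeaves Tg τ).induce S).Preconnected := by
  let f : Tg.induce (Sum.inl ⁻¹' S) →g (attachLeaves Tg τ).induce S :=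
    { toFun := fun t => ⟨.inl t, t.2⟩, map_rel' := id }
  have hinl : ∀ z : S, ∃ t, ((attachLeaves Tg τ).induce S).Reachable z (f t) := by
    rintro ⟨t | a, hz⟩
    · exact ⟨⟨t, hz⟩, .rfl⟩
    · exact ⟨⟨τ a, hleaf a hz⟩, Adj.reachable rfl⟩
  intro x y
  obtain ⟨s, hs⟩ := hinl x
  obtain ⟨t, ht⟩ := hinl y
  exact hs.trans (((hS s t).map f).trans ht.symm)

end attachLeaves

section ExtendByNewVertices

variable {U T : Type} {G : SimpleGraph U} {O : Set U} {Tg : SimpleGraph T} {bag : T → Set O}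
  {L : O → ℕ} {τ : ↥Oᶜ → T}

def extendBags (G : SimpleGraph U) (bag : T → Set O) : T ⊕ ↥Oᶜ → Set U :=
  Sum.elim (fun t => Subtype.val '' bag t) fun a => insert a.1 (G.neighborSet a)

open Classical in
/-- A new vertex without neighbours lands in layer `sInf ∅ = 0`. -/
noncomputable def extendLayering (G : SimpleGraph U) (L : O → ℕ) (u : U) : ℕ :=
  if h : u ∈ O then L ⟨u, h⟩ else sInf (L '' (Subtype.val ⁻¹' G.neighborSet u))

theorem extendLayering_of_mem {u : U} (hu : u ∈ O) : extendLayering G L u = L ⟨u, hu⟩ := by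
  rw [extendLayering, dif_pos hu]

theorem isLayering_extendLayering (hL : IsLayering (G.induce O) L)
    (hnew : ∀ a, a ∉ O → ∀ u, G.Adj a u → u ∈ O)
    (hclique : ∀ a, a ∉ O → G.IsClique (G.neighborSet a)) :
    IsLayering G (extendLayering G L) := by
  have hinf : ∀ a, a ∉ O → ∀ u : O, G.Adj a u →
      extendLayering G L a ≤ L u ∧ L u ≤ extendLayering G L a + 1 := by
    intro a ha u hau
    replace hau : u ∈ Subtype.val ⁻¹' G.neighborSet a := hau
    have hK : (G.induce O).IsClique (Subtype.val ⁻¹' G.neighborSet a) :=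
      isClique_induce_iff.mpr ((hclique a ha).subset (Set.image_preimage_subset _ _))
    obtain ⟨w, hw, hwL⟩ := Nat.sInf_mem (Set.nonempty_of_mem (Set.mem_image_of_mem L hau))
    rw [extendLayering, dif_neg ha, ← hwL]
    exact ⟨hwL ▸ Nat.sInf_le (Set.mem_image_of_mem L hau),
      hL.le_add_one_of_isClique hK hau hw⟩
  refine isLayering_of_forall_adj_le fun u v huv => ?_
  by_cases hu : u ∈ O <;> by_cases hv : v ∈ O
  · rw [extendLayering_of_mem hu, extendLayering_of_mem hv]
    exact (hL ⟨u, hu⟩ ⟨v, hv⟩ huv).1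
  · rw [extendLayering_of_mem hu]
    exact (hinf v hv ⟨u, hu⟩ huv.symm).2
  · rw [extendLayering_of_mem hv]
    exact (hinf u hu ⟨v, hv⟩ huv).1.trans (Nat.le_succ _)
  · exact absurd (hnew u hu v huv) hv

theorem mem_extendBags_inl_iff {u : U} (hu : u ∈ O) {t : T} :
    u ∈ extendBags G bag (.inl t) ↔ ⟨u, hu⟩ ∈ bag t :=
  ⟨fun ⟨v, hv, hvu⟩ => (Subtype.ext hvu : v = ⟨u, hu⟩) ▸ hv, fun h => ⟨_, h, rfl⟩⟩

theorem not_mem_extendBags_inl {u : U} (hu : u ∉ O) {t : T} : u ∉ extendBags G bag (.inl t) :=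
  fun ⟨v, _, hvu⟩ => hu (hvu ▸ v.2)

theorem preconnected_extendBags (hsupp : ∀ v, (Tg.induce {t | v ∈ bag t}).Preconnected)
    (hnew : ∀ a, a ∉ O → ∀ u, G.Adj a u → u ∈ O)
    (hτ : ∀ a : ↥Oᶜ, Subtype.val ⁻¹' G.neighborSet a ⊆ bag (τ a)) (u : U) :
    ((attachLeaves Tg τ).induce {z | u ∈ extendBags G bag z}).Preconnected := by
  by_cases hu : u ∈ O
  · refine attachLeaves.induce_preconnected ?_ fun a ha => ?_
    · have hset : Sum.inl ⁻¹' {z | u ∈ extendBags G bag z} = {t | ⟨u, hu⟩ ∈ bag t} :=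
        Set.ext fun t => mem_extendBags_inl_iff (G := G) hu
      exact hset ▸ hsupp ⟨u, hu⟩
    · rcases (ha : u = a ∨ G.Adj a u) with rfl | hau
      · exact absurd hu a.2
      · exact (mem_extendBags_inl_iff (G := G) hu).mpr (hτ a hau)
  · have honly : ∀ z, u ∈ extendBags G bag z → z = .inr ⟨u, hu⟩ := by
      rintro (t | a) hz
      · exact absurd hz (not_mem_extendBags_inl hu)
      · rcases (hz : u = a ∨ G.Adj a u) with rfl | hau
        · rfl
        · exact absurd (hnew a a.2 u hau) hu
    intro x y
    rw [Subtype.ext ((honly x x.2).trans (honly y y.2).symm)]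

theorem isTreeDecomp_extendBags (hD : IsTreeDecomp (G.induce O) Tg bag)
    (hnew : ∀ a, a ∉ O → ∀ u, G.Adj a u → u ∈ O)
    (hτ : ∀ a : ↥Oᶜ, Subtype.val ⁻¹' G.neighborSet a ⊆ bag (τ a)) :
    IsTreeDecomp G (attachLeaves Tg τ) (extendBags G bag) := by
  obtain ⟨hconn, hac, hcover, hedge, hsupp⟩ := hD
  refine ⟨attachLeaves.connected hconn, attachLeaves.isAcyclic hac, fun u => ?_,
    fun u v huv => ?_, preconnected_extendBags hsupp hnew hτ⟩
  · by_cases hu : u ∈ O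
    · obtain ⟨t, ht⟩ := hcover ⟨u, hu⟩
      exact ⟨.inl t, (mem_extendBags_inl_iff hu).mpr ht⟩
    · exact ⟨.inr ⟨u, hu⟩, Set.mem_insert _ _⟩
  · by_cases hu : u ∈ O <;> by_cases hv : v ∈ O
    · obtain ⟨t, htu, htv⟩ := hedge ⟨u, hu⟩ ⟨v, hv⟩ huv
      exact ⟨.inl t, (mem_extendBags_inl_iff hu).mpr htu, (mem_extendBags_inl_iff hv).mpr htv⟩
    · exact ⟨.inr ⟨v, hv⟩, .inr huv.symm, .inl rfl⟩
    · exact ⟨.inr ⟨u, hu⟩, .inl rfl, .inr huv⟩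
    · exact absurd (hnew u hu v huv) hv

theorem encard_extendBags_inter_layer_le {p : ℕ}
    (hw : ∀ t i, (bag t ∩ L ⁻¹' {i}).encard ≤ p) (hnew : ∀ a, a ∉ O → ∀ u, G.Adj a u → u ∈ O)
    (hτ : ∀ a : ↥Oᶜ, Subtype.val ⁻¹' G.neighborSet a ⊆ bag (τ a))
    (z : T ⊕ ↥Oᶜ) (i : ℕ) :
    (extendBags G bag z ∩ extendLayering G L ⁻¹' {i}).encard ≤ ↑(p + 1) := by
  have hlayer : ∀ s : Set O, Subtype.val '' s ∩ extendLayering G L ⁻¹' {i} =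
      Subtype.val '' (s ∩ L ⁻¹' {i}) := fun s => by
    rw [← Set.image_inter_preimage, ← Set.preimage_comp]
    congr 3
    exact funext fun u => extendLayering_of_mem u.2
  rcases z with t | a
  · calc (extendBags G bag (.inl t) ∩ extendLayering G L ⁻¹' {i}).encard
        = (bag t ∩ L ⁻¹' {i}).encard := by
          rw [extendBags, Sum.elim_inl, hlayer, Subtype.val_injective.encard_image]
      _ ≤ ↑(p + 1) := (hw t i).trans (by norm_cast; omega)
  · have hsub : extendBags G bag (.inr a) ∩ extendLayering G L ⁻¹' {i} ⊆
        insert a.1 (Subtype.val '' (bag (τ a) ∩ L ⁻¹' {i})) := by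
      rintro u ⟨rfl | hau, hui⟩
      · exact Set.mem_insert _ _
      · have hu := hnew a a.2 u hau
        rw [← hlayer]
        exact Set.mem_insert_of_mem _ ⟨⟨⟨u, hu⟩, hτ a hau, rfl⟩, hui⟩
    calc _ ≤ (insert a.1 (Subtype.val '' (bag (τ a) ∩ L ⁻¹' {i}))).encard :=
          Set.encard_le_encard hsub
      _ ≤ (bag (τ a) ∩ L ⁻¹' {i}).encard + 1 := by
          rw [← Subtype.val_injective.encard_image]
          exact Set.encard_insert_le _ _
      _ ≤ ↑(p + 1) := by push_cast; exact add_le_add (hw _ i) le_rfl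

end ExtendByNewVertices

theorem stmt12_general {U : Type} (p : ℕ) (G : SimpleGraph U) (O : Set U)
    (hold : LayeredTreewidthLE O (G.induce O) p)
    (hnew : ∀ a, a ∉ O → ∀ u, G.Adj a u → u ∈ O)
    (hclique : ∀ a, a ∉ O → G.IsClique (G.neighborSet a)) :
    LayeredTreewidthLE U G (p + 1) := by
  obtain ⟨T, Tg, bag, L, hD, hL, hw⟩ := hold
  have hbag : ∀ a : ↥Oᶜ, ∃ t, Subtype.val ⁻¹' G.neighborSet a ⊆ bag t := fun a =>
    hD.exists_bag_superset_of_isClique hL hw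
      (isClique_induce_iff.mpr ((hclique a a.2).subset (Set.image_preimage_subset _ _)))
  choose τ hτ using hbag
  exact ⟨T ⊕ ↥Oᶜ, attachLeaves Tg τ, extendBags G bag, extendLayering G L,
    isTreeDecomp_extendBags hD hnew hτ, isLayering_extendLayering hL hnew hclique,
    encard_extendBags_inter_layer_le hw hnew hτ⟩

/-- Adding new vertices whose neighborhoods are cliques of `H` (and only edges
incident with new vertices) increases the layered tree-width by at most 1. -/
theorem stmt12 {U : Type} (p : ℕ) (hp : 0 < p) (G : SimpleGraph U) (O : Set U)
    (hold : LayeredTreewidthLE O (G.induce O) p)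
    (hnew : ∀ a, a ∉ O → ∀ u, G.Adj a u → u ∈ O)
    (hclique : ∀ a, a ∉ O → G.IsClique (G.neighborSet a)) :
    LayeredTreewidthLE U G (p + 1) :=
  stmt12_general p G O hold hnew hclique
end
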